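/- For the Invincible Fighter (u = 1), let t(n,j) for 1 ≤ j ≤ n−1 denote the unique solution in t of N_n(j+1,t) = N_n(j,t), and set t(n,n) = 0 and t(n,0) = ∞. Then for every n ≥ 1 and every j = 0, …, n−1: t(n,j+1) < t(n+1,j+1) < t(n,j). In particular, K(n+1,·) changes exactly once in every interval of constancy of K(n,·). -/

import Mathlib

open Real MeasureTheory Filter Topology

/-- Auxiliary history-based recursion: `Nhist a u n m t` equals `N(m,t)` when `m ≤ n`. -/
noncomputable def Nhist (a : ℕ → ℝ) (u : ℝ) : ℕ → ℕ → ℝ → ℝ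
  | 0, _, _ => 0
  | n + 1, m, t =>
      if m ≤ n then Nhist a u n m t
      else (Finset.Icc 1 (n + 1)).sup'
          (Finset.nonempty_Icc.mpr (Nat.succ_le_succ (Nat.zero_le n)))
          (fun j => a j + (a j * (1 - u) + u) *
            (Real.exp (-t) * ∫ x in (0:ℝ)..t, Nhist a u n (n + 1 - j) x * Real.exp x))

/-- `Nval a u n t` is `N(n,t)`, the optimal expected number of enemy planes shot down,
with `N(0,t) = 0` and `N(n,t) = max_{1 ≤ j ≤ n} N_n(j,t)`. -/
noncomputable def Nval (a : ℕ → ℝ) (u : ℝ) (n : ℕ) (t : ℝ) : ℝ :=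
  Nhist a u n n t

/-- `Nstar a u r t` is `N*(r,t) = e^{-t} ∫_0^t N(r,x) e^x dx` (so `N*(0,t) = 0`). -/
noncomputable def Nstar (a : ℕ → ℝ) (u : ℝ) (r : ℕ) (t : ℝ) : ℝ :=
  Real.exp (-t) * ∫ x in (0:ℝ)..t, Nval a u r x * Real.exp x

/-- `Nalloc a u n j t` is `N_n(j,t) = a(j) + c(j)·N*(n-j,t)` where `c(j) = a(j)(1-u)+u`. -/
noncomputable def Nalloc (a : ℕ → ℝ) (u : ℝ) (n j : ℕ) (t : ℝ) : ℝ :=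
  a j + (a j * (1 - u) + u) * Nstar a u (n - j) t

/-- `Kopt a u n t = min { j ∈ {1,…,n} : N_n(j,t) = N(n,t) }`. -/
noncomputable def Kopt (a : ℕ → ℝ) (u : ℝ) (n : ℕ) (t : ℝ) : ℕ :=
  sInf {j : ℕ | 1 ≤ j ∧ j ≤ n ∧ Nalloc a u n j t = Nval a u n t}

/-!
Write `D_e(t) = N*(e+1,t) - N*(e,t)`. For `u = 1` the equation `N_n(j+1,t) = N_n(j,t)` reads
`D_{n-j-1}(t) = a(j+1) - a(j)`, so `t(n,j)` is the unique time at which the continuous function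
`D_{n-j-1}`, which vanishes at `0`, reaches the positive level `a(j+1) - a(j)`. Hence `t(n+1,j+1)`
and `t(n,j)` are hitting times of the same `D_{n-j-1}` at the levels
`a(j+2) - a(j+1) < a(j+1) - a(j)`, while `t(n,j+1)` and `t(n+1,j+1)` are hitting times of one level
by `D_{n-j-2} > D_{n-j-1}`; the intermediate value theorem orders them.

The inequality `D_{e+1} < D_e` on `t > 0` is strict concavity of `N*(·,t)`. Averaging against `eˣ`
inherits it from the concavity of `N(·,x)` for every `x ≥ 0` (induction on `n`, trading one unit
between two maximising allocations) together with `N(·,0) = a`.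
-/

theorem add_le_add_of_concave_seq {f : ℕ → ℝ} {m : ℕ}
    (hf : ∀ i < m, f (i + 2) + f i ≤ 2 * f (i + 1)) {p q : ℕ} (hpq : p ≤ q)
    (hqm : q ≤ m) : f (q + 1) + f p ≤ f (p + 1) + f q := by
  induction q, hpq using Nat.le_induction with
  | base => rfl
  | succ q _ ih =>
    linarith [ih (by omega), hf q (by omega)]

theorem lt_of_unique_crossing {f : ℝ → ℝ} (hf : Continuous f) {c r R : ℝ} (hR : 0 ≤ R)
    (h0 : f 0 ≤ c) (hc : c < f R) (huniq : ∀ s, 0 ≤ s → f s = c → s = r) : r < R := by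
  obtain ⟨s, ⟨hs0, hsR⟩, hsc⟩ := intermediate_value_Ico hR hf.continuousOn ⟨h0, hc⟩
  exact huniq s hs0 hsc ▸ hsR

section ExpAverage

noncomputable def expAverage (f : ℝ → ℝ) (t : ℝ) : ℝ :=
  Real.exp (-t) * ∫ x in (0:ℝ)..t, f x * Real.exp x

variable {f g : ℝ → ℝ}

theorem Continuous.expAverage (hf : Continuous f) : Continuous (expAverage f) :=
  (continuous_exp.comp continuous_neg).mul <| intervalIntegral.continuous_primitive
    (fun _ _ => (hf.mul continuous_exp).intervalIntegrable _ _) 0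

theorem expAverage_zero_right (f : ℝ → ℝ) : expAverage f 0 = 0 := by
  simp [expAverage]

theorem expAverage_add (hf : Continuous f) (hg : Continuous g) (t : ℝ) :
    expAverage (fun x => f x + g x) t = expAverage f t + expAverage g t := by
  simp only [expAverage, add_mul]
  rw [intervalIntegral.integral_add (f := fun x => f x * Real.exp x)
    (g := fun x => g x * Real.exp x) ((hf.mul continuous_exp).intervalIntegrable _ _)
    ((hg.mul continuous_exp).intervalIntegrable _ _), mul_add]

theorem expAverage_const_mul (c : ℝ) (f : ℝ → ℝ) (t : ℝ) :
    expAverage (fun x => c * f x) t = c * expAverage f t := by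
  simp only [expAverage, mul_assoc, intervalIntegral.integral_const_mul]
  ring

theorem expAverage_le_expAverage (hf : Continuous f) (hg : Continuous g) {t : ℝ} (ht : 0 ≤ t)
    (hfg : ∀ x ∈ Set.Icc 0 t, f x ≤ g x) : expAverage f t ≤ expAverage g t := by
  refine mul_le_mul_of_nonneg_left ?_ (exp_pos _).le
  exact intervalIntegral.integral_mono_on ht ((hf.mul continuous_exp).intervalIntegrable _ _)
    ((hg.mul continuous_exp).intervalIntegrable _ _)
    fun x hx => mul_le_mul_of_nonneg_right (hfg x hx) (exp_pos x).le

theorem expAverage_lt_expAverage (hf : Continuous f) (hg : Continuous g) {t : ℝ} (ht : 0 < t)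
    (hfg : ∀ x ∈ Set.Icc 0 t, f x ≤ g x) (h0 : f 0 < g 0) :
    expAverage f t < expAverage g t := by
  refine mul_lt_mul_of_pos_left ?_ (exp_pos _)
  refine intervalIntegral.integral_lt_integral_of_continuousOn_of_le_of_exists_lt ht
    (hf.mul continuous_exp).continuousOn (hg.mul continuous_exp).continuousOn
    (fun x hx => mul_le_mul_of_nonneg_right (hfg x (Set.Ioc_subset_Icc_self hx)) (exp_pos x).le)
    ⟨0, Set.left_mem_Icc.2 ht.le, mul_lt_mul_of_pos_right h0 (exp_pos 0)⟩

theorem expAverage_const (c t : ℝ) : expAverage (fun _ => c) t = c * (1 - Real.exp (-t)) := by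
  rw [expAverage, intervalIntegral.integral_const_mul, integral_exp, exp_zero, exp_neg]
  field_simp

end ExpAverage

section Recursion

variable (a : ℕ → ℝ) (u : ℝ)

theorem Nstar_eq_expAverage (r : ℕ) : Nstar a u r = expAverage (Nval a u r) := rfl

theorem Nhist_eq_Nval {n m : ℕ} (h : m ≤ n) (t : ℝ) : Nhist a u n m t = Nval a u m t := by
  induction n with
  | zero => obtain rfl : m = 0 := by omega
            rfl
  | succ n ih =>
    rcases h.lt_or_eq with h | rfl
    · rw [Nhist, if_pos (by omega)]
      exact ih (by omega)
    · rfl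

theorem Nval_zero (t : ℝ) : Nval a u 0 t = 0 := rfl

theorem Nval_succ (n : ℕ) (t : ℝ) :
    Nval a u (n + 1) t = (Finset.Icc 1 (n + 1)).sup' (Finset.nonempty_Icc.2 (by omega))
      (fun j => Nalloc a u (n + 1) j t) := by
  rw [Nval, Nhist, if_neg (by omega)]
  refine Finset.sup'_congr _ rfl fun j hj => ?_
  simp only [Nalloc, Nstar, Nhist_eq_Nval a u (show n + 1 - j ≤ n by grind)]

theorem Nalloc_le_Nval {n j : ℕ} (hj : j ∈ Finset.Icc 1 n) (t : ℝ) :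
    Nalloc a u n j t ≤ Nval a u n t := by
  obtain ⟨n, rfl⟩ : ∃ m, n = m + 1 := ⟨n - 1, by grind⟩
  exact Nval_succ a u n t ▸ Finset.le_sup' (fun j => Nalloc a u (n + 1) j t) hj

theorem exists_Nalloc_eq_Nval {n : ℕ} (hn : 1 ≤ n) (t : ℝ) :
    ∃ k ∈ Finset.Icc 1 n, Nval a u n t = Nalloc a u n k t := by
  obtain ⟨n, rfl⟩ : ∃ m, n = m + 1 := ⟨n - 1, by omega⟩
  rw [Nval_succ]
  exact Finset.exists_mem_eq_sup' _ _

theorem Nstar_zero (t : ℝ) : Nstar a u 0 t = 0 := by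
  simp [Nstar, Nval_zero]

theorem Nstar_zero_right (r : ℕ) : Nstar a u r 0 = 0 :=
  expAverage_zero_right _

theorem continuous_Nval (n : ℕ) : Continuous (Nval a u n) := by
  induction n using Nat.strong_induction_on with
  | _ n ih =>
    rcases n with _ | n
    · exact continuous_const
    rw [show Nval a u (n + 1) = _ from funext (Nval_succ a u n)]
    refine Continuous.finset_sup'_apply _ fun j hj => continuous_const.add ?_
    exact continuous_const.mul ((ih _ (by grind)).expAverage)

theorem continuous_Nstar (r : ℕ) : Continuous (Nstar a u r) :=
  (continuous_Nval a u r).expAverage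

theorem Nval_zero_right (ha0 : a 0 = 0) (hmono : Monotone a) (n : ℕ) : Nval a u n 0 = a n := by
  rcases n with _ | n
  · exact ha0.symm
  have hNalloc : ∀ j, Nalloc a u (n + 1) j 0 = a j := fun j => by
    simp [Nalloc, Nstar_zero_right]
  rw [Nval_succ]
  refine le_antisymm (Finset.sup'_le _ _ fun j hj => ?_) ?_
  · exact hNalloc j ▸ hmono (Finset.mem_Icc.1 hj).2
  · exact hNalloc (n + 1) ▸ Finset.le_sup' (fun j => Nalloc a u (n + 1) j 0)
      (Finset.right_mem_Icc.2 (by omega))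

theorem Nval_one (t : ℝ) : Nval a u 1 t = a 1 := by
  simp [Nval_succ, Nalloc, Nstar_zero]

theorem Nstar_one (t : ℝ) : Nstar a u 1 t = a 1 * (1 - Real.exp (-t)) := by
  rw [Nstar_eq_expAverage, funext (Nval_one a u), expAverage_const]

theorem Nstar_concave_of_Nval_concave {m : ℕ} {t : ℝ} (ht : 0 ≤ t)
    (h : ∀ x ∈ Set.Icc 0 t, Nval a u (m + 2) x + Nval a u m x ≤ 2 * Nval a u (m + 1) x) :
    Nstar a u (m + 2) t + Nstar a u m t ≤ 2 * Nstar a u (m + 1) t := by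
  have hc := continuous_Nval a u
  simp only [Nstar_eq_expAverage]
  rw [← expAverage_add (hc _) (hc _), ← expAverage_const_mul]
  exact expAverage_le_expAverage ((hc _).add (hc _)) (continuous_const.mul (hc _)) ht h

end Recursion

section Invincible

variable {a : ℕ → ℝ}

theorem Nalloc_one (n j : ℕ) (t : ℝ) : Nalloc a 1 n j t = a j + Nstar a 1 (n - j) t := by
  simp [Nalloc]

theorem Nval_concave_zero (ha0 : a 0 = 0) (ha1 : 0 ≤ a 1) (hconc : a 2 + a 0 ≤ 2 * a 1)
    {t : ℝ} :
    Nval a 1 2 t + Nval a 1 0 t ≤ 2 * Nval a 1 1 t := by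
  rw [Nval_zero, Nval_one, add_zero, Nval_succ]
  refine Finset.sup'_le _ _ fun j hj => ?_
  obtain rfl | rfl : j = 1 ∨ j = 2 := by grind
  · rw [Nalloc_one, Nstar_one]
    nlinarith [exp_pos (-t)]
  · rw [Nalloc_one, Nat.sub_self, Nstar_zero]
    linarith

theorem Nval_concave_of_Nstar_concave (hconc : ∀ i, a (i + 2) + a i ≤ 2 * a (i + 1)) {n : ℕ}
    (hn : 1 ≤ n) {t : ℝ}
    (hstar : ∀ i < n, Nstar a 1 (i + 2) t + Nstar a 1 i t ≤ 2 * Nstar a 1 (i + 1) t) :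
    Nval a 1 (n + 2) t + Nval a 1 n t ≤ 2 * Nval a 1 (n + 1) t := by
  obtain ⟨k, hk, hNk⟩ := exists_Nalloc_eq_Nval a 1 hn t
  obtain ⟨j, hj, hNj⟩ := exists_Nalloc_eq_Nval a 1 (n := n + 2) (by omega) t
  have hcomp : ∀ i ∈ Finset.Icc 1 (n + 1),
      a i + Nstar a 1 (n + 1 - i) t ≤ Nval a 1 (n + 1) t :=
    fun i hi => Nalloc_one (a := a) (n + 1) i t ▸ Nalloc_le_Nval a 1 hi t
  rw [Finset.mem_Icc] at hj hk
  rw [hNk, hNj, Nalloc_one, Nalloc_one]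
  -- compare with the allocations `j, k` (if `j ≤ k + 1`) or `j - 1, k + 1` for `n + 1`
  rcases le_or_gt j (k + 1) with hjk | hjk
  · have hex := add_le_add_of_concave_seq (f := (Nstar a 1 · t)) hstar (p := n - k)
      (q := n + 1 - j) (by omega) (by omega)
    rw [show n + 1 - j + 1 = n + 2 - j by omega, show n - k + 1 = n + 1 - k by omega] at hex
    linarith [hcomp j (by grind), hcomp k (by grind)]
  · have hex := add_le_add_of_concave_seq (fun i _ => hconc i) (p := k) (q := j - 1)
      (by omega) le_rfl
    have hj' := hcomp (j - 1) (by grind)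
    have hk' := hcomp (k + 1) (by grind)
    rw [show j - 1 + 1 = j by omega] at hex
    rw [show n + 1 - (j - 1) = n + 2 - j by omega] at hj'
    rw [show n + 1 - (k + 1) = n - k by omega] at hk'
    linarith

theorem Nval_concave (ha0 : a 0 = 0) (ha1 : 0 ≤ a 1)
    (hconc : ∀ i, a (i + 2) + a i ≤ 2 * a (i + 1)) (n : ℕ) {t : ℝ} (ht : 0 ≤ t) :
    Nval a 1 (n + 2) t + Nval a 1 n t ≤ 2 * Nval a 1 (n + 1) t := by
  induction n using Nat.strong_induction_on generalizing t with
  | _ n ih =>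
    rcases Nat.eq_zero_or_pos n with rfl | hn
    · exact Nval_concave_zero ha0 ha1 (hconc 0)
    · exact Nval_concave_of_Nstar_concave hconc hn fun i hi =>
        Nstar_concave_of_Nval_concave a 1 ht fun x hx => ih i hi hx.1

theorem Nstar_strict_concave (ha0 : a 0 = 0) (hmono : StrictMono a)
    (hconc : ∀ i, a (i + 2) + a i < 2 * a (i + 1)) (m : ℕ) {t : ℝ} (ht : 0 < t) :
    Nstar a 1 (m + 2) t + Nstar a 1 m t < 2 * Nstar a 1 (m + 1) t := by
  have hc := continuous_Nval a 1
  have hN0 := Nval_zero_right a 1 ha0 hmono.monotone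
  simp only [Nstar_eq_expAverage]
  rw [← expAverage_add (hc _) (hc _), ← expAverage_const_mul]
  refine expAverage_lt_expAverage ((hc _).add (hc _)) (continuous_const.mul (hc _)) ht
    (fun x hx => Nval_concave ha0 (ha0 ▸ hmono.monotone (Nat.zero_le 1))
      (fun i => (hconc i).le) m hx.1) ?_
  show Nval a 1 (m + 2) 0 + Nval a 1 m 0 < 2 * Nval a 1 (m + 1) 0
  simpa only [hN0] using hconc m

theorem Nalloc_one_succ_eq_iff {n j e : ℕ} (hn : n = j + 1 + e) (s : ℝ) :
    Nalloc a 1 n (j + 1) s = Nalloc a 1 n j s ↔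
      Nstar a 1 (e + 1) s - Nstar a 1 e s = a (j + 1) - a j := by
  subst hn
  rw [Nalloc_one, Nalloc_one, show j + 1 + e - (j + 1) = e by omega,
    show j + 1 + e - j = e + 1 by omega]
  constructor <;> intro h <;> linarith

end Invincible

open ENNReal in
theorem invincible_crossing_interlace_general
    (a : ℕ → ℝ) (ha0 : a 0 = 0)
    (hmono : StrictMono a)
    (hconc : ∀ j : ℕ, a (j + 2) - a (j + 1) < a (j + 1) - a j)
    (tc : ℕ → ℕ → ℝ≥0∞)
    (htop : ∀ n : ℕ, 1 ≤ n → tc n 0 = ⊤)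
    (hzero : ∀ n : ℕ, 1 ≤ n → tc n n = 0)
    (hsol : ∀ n j : ℕ, 1 ≤ j → j + 1 ≤ n →
      ∃ r : ℝ, 0 < r ∧ tc n j = ENNReal.ofReal r ∧
        Nalloc a 1 n (j + 1) r = Nalloc a 1 n j r ∧
        ∀ s : ℝ, 0 ≤ s → Nalloc a 1 n (j + 1) s = Nalloc a 1 n j s → s = r) :
    ∀ n : ℕ, 1 ≤ n → ∀ j : ℕ, j + 1 ≤ n →
      tc n (j + 1) < tc (n + 1) (j + 1) ∧ tc (n + 1) (j + 1) < tc n j := by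
  have hconc' (i : ℕ) : a (i + 2) + a i < 2 * a (i + 1) := by linarith [hconc i]
  have hcont (e : ℕ) : Continuous fun s => Nstar a 1 (e + 1) s - Nstar a 1 e s :=
    (continuous_Nstar a 1 _).sub (continuous_Nstar a 1 _)
  intro n hn j hj
  obtain ⟨d, rfl⟩ : ∃ d, n = j + 1 + d := ⟨n - (j + 1), by omega⟩
  obtain ⟨r, hr, htr, hcross, huniq⟩ := hsol (j + 1 + d + 1) (j + 1) (by omega) (by omega)
  rw [Nalloc_one_succ_eq_iff (e := d) (by omega)] at hcross
  have hgap : 0 < a (j + 1 + 1) - a (j + 1) := sub_pos.2 (hmono (by omega))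
  refine ⟨?_, ?_⟩
  · rcases d with _ | e
    · rw [htr, hzero _ hn]
      exact ENNReal.ofReal_pos.2 hr
    obtain ⟨r₀, -, htr₀, -, huniq₀⟩ :=
      hsol (j + 1 + (e + 1)) (j + 1) (by omega) (by omega)
    rw [htr₀, htr, ENNReal.ofReal_lt_ofReal_iff hr]
    refine lt_of_unique_crossing (hcont e) hr.le (by simp [Nstar_zero_right, hgap.le])
      (by linarith [Nstar_strict_concave ha0 hmono hconc' e hr])
      fun s hs h => huniq₀ s hs ((Nalloc_one_succ_eq_iff (e := e) (by omega) s).2 h)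
  · rcases j with _ | j
    · rw [htr, htop _ hn]
      exact ENNReal.ofReal_lt_top
    obtain ⟨r₂, hr₂, htr₂, hcross₂, -⟩ :=
      hsol (j + 1 + 1 + d) (j + 1) (by omega) (by omega)
    rw [Nalloc_one_succ_eq_iff (e := d) (by omega)] at hcross₂
    rw [htr, htr₂, ENNReal.ofReal_lt_ofReal_iff hr₂]
    refine lt_of_unique_crossing (hcont d) hr₂.le (by simp [Nstar_zero_right, hgap.le])
      (by linarith [hconc (j + 1)])
      fun s hs h => huniq s hs ((Nalloc_one_succ_eq_iff (e := d) (by omega) s).2 h)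

open ENNReal in
/-- Interlacing of the crossing times (from the proof of Theorem 4.3): with
`t(n,j)` the unique solution of `N_n(j+1,t) = N_n(j,t)` for `1 ≤ j ≤ n-1`, and
`t(n,n) = 0`, `t(n,0) = ∞`, one has `t(n,j+1) < t(n+1,j+1) < t(n,j)` for all
`n ≥ 1` and `j = 0,…,n-1`. -/
theorem invincible_crossing_interlace
    (a : ℕ → ℝ) (haI : ∀ j, a j ∈ Set.Icc (0:ℝ) 1) (ha0 : a 0 = 0)
    (hmono : StrictMono a)
    (hconc : ∀ j : ℕ, a (j + 2) - a (j + 1) < a (j + 1) - a j)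
    (tc : ℕ → ℕ → ℝ≥0∞)
    (htop : ∀ n : ℕ, 1 ≤ n → tc n 0 = ⊤)
    (hzero : ∀ n : ℕ, 1 ≤ n → tc n n = 0)
    (hsol : ∀ n j : ℕ, 1 ≤ j → j + 1 ≤ n →
      ∃ r : ℝ, 0 < r ∧ tc n j = ENNReal.ofReal r ∧
        Nalloc a 1 n (j + 1) r = Nalloc a 1 n j r ∧
        ∀ s : ℝ, 0 ≤ s → Nalloc a 1 n (j + 1) s = Nalloc a 1 n j s → s = r) :
    ∀ n : ℕ, 1 ≤ n → ∀ j : ℕ, j + 1 ≤ n →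
      tc n (j + 1) < tc (n + 1) (j + 1) ∧ tc (n + 1) (j + 1) < tc n j :=
  invincible_crossing_interlace_general a ha0 hmono hconc tc htop hzero hsol
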